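/- arXiv:math/9911152 — 2 statements merged into one kernel-verified Lean document; each statement's English description precedes it below -/
import Mathlib

section
/- If A is a positive semidefinite invertible n×n matrix, then I(A) = (Σ_{i,j} (A^{-1})_{ij})^{-1} = ⟨p, A^{-1}p⟩^{-1}, where p = (1,...,1). -/
/-!
With `p = (1, …, 1)` we have `P = p p*`. Since `A` is positive definite, for `t > 0` the block
matrix `[[A, p], [p*, t⁻¹]]` has a positive definite corner on either diagonal, and its two Schur
complements are `A - t P` and the scalar `t⁻¹ - ⟨p, A⁻¹ p⟩`; one is positive semidefinite iff the
block matrix is, iff the other is. So the admissible `t` form the interval `[0, ⟨p, A⁻¹ p⟩⁻¹]`.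
-/

open Matrix ComplexOrder

/-- The minimal Hadamard index `I(A)`. -/
noncomputable def minIdx {k : Type*} [Fintype k] (A : Matrix k k ℂ) : ℝ :=
  sSup {t : ℝ | 0 ≤ t ∧ (A - (t : ℂ) • (Matrix.of fun _ _ => (1 : ℂ))).PosSemidef}

namespace Matrix

variable {m : Type*} [Fintype m] [DecidableEq m]

theorem posSemidef_sub_inv_smul_vecMulVec_iff {K : Type*} [Field K] [PartialOrder K]
    [StarRing K] [StarOrderedRing K] {A : Matrix m m K} (hA : A.PosDef) (v : m → K) {s : K}
    (hs : 0 < s) :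
    (A - s⁻¹ • vecMulVec v (star v)).PosSemidef ↔ star v ⬝ᵥ (A⁻¹ *ᵥ v) ≤ s := by
  let _ := hA.isUnit.invertible
  let D : Matrix Unit Unit K := diagonal fun _ => s
  have hD : D.PosDef := .diagonal fun _ => hs
  let _ : Invertible D := hD.isUnit.invertible
  have hDinv : D⁻¹ = diagonal fun _ => s⁻¹ :=
    inv_eq_left_inv <| by simp [D, inv_mul_cancel₀ hs.ne']
  have hcomplA : replicateCol Unit v * D⁻¹ * (replicateCol Unit v)ᴴ =
      s⁻¹ • vecMulVec v (star v) := by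
    ext i j
    simp [hDinv, mul_apply, vecMulVec, mul_assoc, mul_left_comm]
  have hcomplD : D - (replicateCol Unit v)ᴴ * A⁻¹ * replicateCol Unit v =
      diagonal fun _ => s - star v ⬝ᵥ (A⁻¹ *ᵥ v) := by
    rw [conjTranspose_replicateCol, Matrix.mul_assoc, ← replicateCol_mulVec,
      replicateRow_mul_replicateCol]
    ext
    simp [D]
  have schur := (PosDef.fromBlocks₂₂ A (replicateCol Unit v) hD).symm.trans
    (PosDef.fromBlocks₁₁ (replicateCol Unit v) D hA)
  rw [hcomplA, hcomplD, posSemidef_diagonal_iff] at schur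
  simpa only [sub_nonneg, forall_const] using schur

theorem posSemidef_sub_smul_vecMulVec_iff {𝕜 : Type*} [RCLike 𝕜] {A : Matrix m m 𝕜}
    (hA : A.PosDef) (v : m → 𝕜) {t : ℝ} (ht : 0 ≤ t) :
    (A - (t : 𝕜) • vecMulVec v (star v)).PosSemidef ↔
      t * RCLike.re (star v ⬝ᵥ (A⁻¹ *ᵥ v)) ≤ 1 := by
  obtain rfl | ht := ht.eq_or_lt
  · simpa using hA.posSemidef
  have hc := RCLike.nonneg_iff.mp (hA.inv.posSemidef.dotProduct_mulVec_nonneg v)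
  have key := posSemidef_sub_inv_smul_vecMulVec_iff hA v (s := ((t⁻¹ : ℝ) : 𝕜))
    (RCLike.ofReal_pos.mpr (inv_pos.mpr ht))
  rwa [← RCLike.ofReal_inv, inv_inv, RCLike.le_iff_re_im, RCLike.ofReal_re, RCLike.ofReal_im,
    hc.2, and_iff_left rfl, ← mul_one t⁻¹, le_inv_mul_iff₀ ht] at key

end Matrix

theorem Real.sSup_setOf_nonneg_mul_le_one {c : ℝ} (hc : 0 ≤ c) :
    sSup {t : ℝ | 0 ≤ t ∧ t * c ≤ 1} = c⁻¹ := by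
  obtain rfl | hc := hc.eq_or_lt
  -- unbounded set: the junk value `sSup = 0` agrees with `0⁻¹ = 0`
  · have : {t : ℝ | 0 ≤ t ∧ t * 0 ≤ 1} = Set.Ici 0 := by ext; simp
    rw [this, _root_.inv_zero, Real.sSup_of_not_bddAbove (not_bddAbove_Ici 0)]
  have : {t : ℝ | 0 ≤ t ∧ t * c ≤ 1} = Set.Icc 0 c⁻¹ := by
    ext t
    simp only [Set.mem_ofPred_eq, Set.mem_Icc, ← le_inv_mul_iff₀' hc, mul_one]
  rw [this, csSup_Icc (inv_pos.mpr hc).le]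

theorem minIdx_eq_inv_dotProduct_inv_mulVec {k : Type*} [Fintype k] [DecidableEq k]
    {A : Matrix k k ℂ} (hA : A.PosDef) :
    (minIdx A : ℂ) = ((fun _ => (1 : ℂ)) ⬝ᵥ A⁻¹ *ᵥ (fun _ => 1))⁻¹ := by
  set p : k → ℂ := fun _ => 1
  have hp : star p = p := funext fun _ => star_one ℂ
  have hc : 0 ≤ p ⬝ᵥ A⁻¹ *ᵥ p := by
    simpa only [hp] using hA.inv.posSemidef.dotProduct_mulVec_nonneg p
  have hP : (of fun _ _ => (1 : ℂ)) = vecMulVec p p := by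
    ext; simp [vecMulVec, p]
  have hmin : minIdx A = (p ⬝ᵥ A⁻¹ *ᵥ p).re⁻¹ := by
    rw [minIdx, hP, ← Real.sSup_setOf_nonneg_mul_le_one (Complex.nonneg_iff.mp hc).1]
    refine congrArg sSup (Set.ext fun t => and_congr_right fun ht => ?_)
    have := posSemidef_sub_smul_vecMulVec_iff hA p ht
    rwa [hp] at this
  rw [hmin, Complex.ofReal_inv, ← Complex.eq_re_of_ofReal_le hc]

theorem minIdx_of_invertible {n : ℕ} (A : Matrix (Fin n) (Fin n) ℂ)
    (hA : A.PosSemidef) (hinv : IsUnit A) :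
    (minIdx A : ℂ) = (∑ i, ∑ j, A⁻¹ i j)⁻¹ ∧
    (minIdx A : ℂ) = ((fun _ => (1 : ℂ)) ⬝ᵥ A⁻¹.mulVec (fun _ => 1))⁻¹ := by
  have hmin := minIdx_eq_inv_dotProduct_inv_mulVec (hA.posDef_iff_isUnit.mpr hinv)
  refine ⟨?_, hmin⟩
  rw [hmin]
  simp [dotProduct, mulVec]
end

section
/- Let A be a real symmetric positive semidefinite n×n matrix, M = {z ∈ ℝ^n : Σ_i z_i = 1}, and p = (1,...,1). Then the set {z ∈ M : ⟨Az, z⟩ = I(A)} equals the set {z ∈ M : Az = I(A)·p}, and this set is nonempty. -/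
/-!
With `J = p pᵀ` the all-ones matrix, `⟨(A - tJ)z, z⟩ = ⟨Az, z⟩ - t (∑ zᵢ)²`. The supremum
`I(A)` is attained, so `B = A - I(A) J` is positive semidefinite, and on `∑ zᵢ = 1` the value
`⟨Az, z⟩ - I(A)` is `⟨Bz, z⟩`, which vanishes exactly on `ker B`; there `Az = I(A) J z = I(A) p`.
A minimizer exists as soon as some `u ∈ ker B` has `∑ uᵢ ≠ 0`. Otherwise `p ⊥ ker B`, so
`p = Bw` for the symmetric `B`, and Cauchy–Schwarz for the form of `B` gives
`(∑ zᵢ)² = ⟨Bw, z⟩² ≤ ⟨Bw, w⟩ ⟨Bz, z⟩`, i.e. `A - (I(A) + ⟨Bw, w⟩⁻¹) J ⪰ 0`,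
contradicting the maximality of `I(A)`.
-/

open Matrix

/-- The minimal Hadamard index `I(A)` of a real symmetric positive semidefinite matrix. -/
noncomputable def minIdxR {k : Type*} [Fintype k] (A : Matrix k k ℝ) : ℝ :=
  sSup {t : ℝ | 0 ≤ t ∧ (A - t • (Matrix.of fun _ _ => (1 : ℝ))).PosSemidef}

local notation "𝟏" => Matrix.of fun _ _ => (1 : ℝ)

namespace Matrix

theorem IsSymm.mulVec_dotProduct {R k : Type*} [CommSemiring R] [Fintype k] {B : Matrix k k R}
    (hB : B.IsSymm) (w z : k → R) : (B *ᵥ w) ⬝ᵥ z = w ⬝ᵥ B *ᵥ z := by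
  rw [dotProduct_mulVec, ← mulVec_transpose, hB.eq, dotProduct_comm]

section OrderedField

variable {R k : Type*} [Field R] [LinearOrder R] [IsStrictOrderedRing R] [Fintype k]

theorem IsSymm.exists_mulVec_eq_of_forall_mulVec_eq_zero {B : Matrix k k R} (hB : B.IsSymm)
    {p : k → R} (hp : ∀ u, B *ᵥ u = 0 → p ⬝ᵥ u = 0) : ∃ w, B *ᵥ w = p := by
  have hdisj : Disjoint (LinearMap.ker B.mulVecLin) (LinearMap.range B.mulVecLin) := by
    rw [Submodule.disjoint_def]
    rintro _ hker ⟨y, rfl⟩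
    have hBBy : B *ᵥ B *ᵥ y = 0 := hker
    have : B *ᵥ y ⬝ᵥ B *ᵥ y = 0 := by rw [hB.mulVec_dotProduct, hBBy, dotProduct_zero]
    exact dotProduct_self_eq_zero.mp this
  have htop : LinearMap.ker B.mulVecLin ⊔ LinearMap.range B.mulVecLin = ⊤ :=
    Submodule.eq_top_of_disjoint _ _
      (by rw [add_comm, B.mulVecLin.finrank_range_add_finrank_ker]) hdisj
  obtain ⟨u, hu, _, ⟨w, rfl⟩, hp_eq⟩ := Submodule.mem_sup.mp (htop ▸ Submodule.mem_top : p ∈ _)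
  have hBu : B *ᵥ u = 0 := hu
  have hu0 : u ⬝ᵥ u = 0 := by
    have := hp u hBu
    rwa [← hp_eq, add_dotProduct, mulVecLin_apply, hB.mulVec_dotProduct, hBu, dotProduct_zero,
      add_zero] at this
  refine ⟨w, ?_⟩
  rw [← hp_eq, dotProduct_self_eq_zero.mp hu0, zero_add, mulVecLin_apply]

end OrderedField

section Real

variable {k : Type*} [Fintype k]

theorem PosSemidef.sq_dotProduct_mulVec_le {B : Matrix k k ℝ} (hB : B.PosSemidef) (w z : k → ℝ) :
    (w ⬝ᵥ B *ᵥ z) ^ 2 ≤ (w ⬝ᵥ B *ᵥ w) * (z ⬝ᵥ B *ᵥ z) := by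
  let _ := B.toSeminormedAddCommGroup hB
  let _ := B.toInnerProductSpace hB
  have := real_inner_mul_inner_self_le z w
  change (B *ᵥ w) ⬝ᵥ z * ((B *ᵥ w) ⬝ᵥ z) ≤ (B *ᵥ z) ⬝ᵥ z * ((B *ᵥ w) ⬝ᵥ w) at this
  have hS : B.IsSymm := isHermitian_iff_isSymm.mp hB.1
  rw [sq, mul_comm (w ⬝ᵥ B *ᵥ w)]
  simpa only [hS.mulVec_dotProduct] using this

end Real

end Matrix

section Ones

variable {k : Type*}

theorem isHermitian_ones : (𝟏 : Matrix k k ℝ).IsHermitian := by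
  ext i j; simp

variable [Fintype k]

theorem ones_mulVec (z : k → ℝ) : (𝟏 : Matrix k k ℝ) *ᵥ z = fun _ => ∑ i, z i := by
  ext i; simp [mulVec, dotProduct]

theorem dotProduct_sub_smul_ones_mulVec (A : Matrix k k ℝ) (t : ℝ) (z : k → ℝ) :
    z ⬝ᵥ (A - t • 𝟏) *ᵥ z = z ⬝ᵥ A *ᵥ z - t * (∑ i, z i) ^ 2 := by
  rw [sub_mulVec, smul_mulVec, dotProduct_sub, dotProduct_smul, ones_mulVec]
  simp only [smul_eq_mul, dotProduct, ← Finset.sum_mul]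
  ring

theorem posSemidef_sub_smul_ones_iff {A : Matrix k k ℝ} (hA : A.IsHermitian) (t : ℝ) :
    (A - t • 𝟏).PosSemidef ↔ ∀ z : k → ℝ, t * (∑ i, z i) ^ 2 ≤ z ⬝ᵥ A *ᵥ z := by
  have hherm : (A - t • 𝟏).IsHermitian := hA.sub (isHermitian_ones.smul (IsSelfAdjoint.all t))
  simp only [posSemidef_iff_dotProduct_mulVec, hherm, true_and, star_trivial,
    dotProduct_sub_smul_ones_mulVec, sub_nonneg]

theorem sub_smul_ones_mulVec_eq_zero_iff (A : Matrix k k ℝ) (t : ℝ) {z : k → ℝ}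
    (hz : ∑ i, z i = 1) : (A - t • 𝟏) *ᵥ z = 0 ↔ A *ᵥ z = fun _ => t := by
  rw [sub_mulVec, smul_mulVec, ones_mulVec, hz, sub_eq_zero]
  simp only [Pi.smul_def, smul_eq_mul, mul_one]

theorem dotProduct_mulVec_eq_iff_mulVec_eq {A : Matrix k k ℝ} {t : ℝ} (hB : (A - t • 𝟏).PosSemidef)
    {z : k → ℝ} (hz : ∑ i, z i = 1) : z ⬝ᵥ A *ᵥ z = t ↔ A *ᵥ z = fun _ => t := by
  rw [← sub_smul_ones_mulVec_eq_zero_iff A t hz, ← hB.dotProduct_mulVec_zero_iff, star_trivial,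
    dotProduct_sub_smul_ones_mulVec, hz, sub_eq_zero, one_pow, mul_one]

theorem posSemidef_sub_inv_smul_ones {B : Matrix k k ℝ} (hB : B.PosSemidef) {w : k → ℝ}
    (hw : B *ᵥ w = fun _ => 1) : (B - (w ⬝ᵥ B *ᵥ w)⁻¹ • 𝟏).PosSemidef := by
  refine (posSemidef_sub_smul_ones_iff hB.1 _).mpr fun z => ?_
  have hsum : ∑ i, z i = w ⬝ᵥ B *ᵥ z := by
    rw [← (isHermitian_iff_isSymm.mp hB.1).mulVec_dotProduct, hw]; simp [dotProduct]
  have hc := hB.dotProduct_mulVec_nonneg w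
  have hq := hB.dotProduct_mulVec_nonneg z
  simp only [star_trivial] at hc hq
  calc (w ⬝ᵥ B *ᵥ w)⁻¹ * (∑ i, z i) ^ 2
      ≤ (w ⬝ᵥ B *ᵥ w)⁻¹ * ((w ⬝ᵥ B *ᵥ w) * (z ⬝ᵥ B *ᵥ z)) := by
        rw [hsum]; gcongr; exact hB.sq_dotProduct_mulVec_le w z
    _ ≤ z ⬝ᵥ B *ᵥ z := by
        rw [← mul_assoc]; exact mul_le_of_le_one_left hq (inv_mul_le_one_of_le₀ le_rfl hc)

theorem isGreatest_minIdxR [Nonempty k] {A : Matrix k k ℝ} (hA : A.PosSemidef) :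
    IsGreatest {t : ℝ | 0 ≤ t ∧ (A - t • 𝟏).PosSemidef} (minIdxR A) := by
  have hbdd : BddAbove {t : ℝ | 0 ≤ t ∧ (A - t • 𝟏).PosSemidef} := by
    refine ⟨((fun _ => 1) ⬝ᵥ A *ᵥ fun _ => 1) / (Fintype.card k : ℝ) ^ 2, fun t ht => ?_⟩
    have := (posSemidef_sub_smul_ones_iff hA.1 t).mp ht.2 fun _ => 1
    simp only [Finset.sum_const, Finset.card_univ, nsmul_eq_mul, mul_one] at this
    exact (le_div_iff₀ (by positivity)).mpr this
  have h0 : (0 : ℝ) ∈ {t : ℝ | 0 ≤ t ∧ (A - t • 𝟏).PosSemidef} := ⟨le_rfl, by simpa using hA⟩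
  refine ⟨⟨le_csSup hbdd h0, (posSemidef_sub_smul_ones_iff hA.1 _).mpr fun z => ?_⟩,
    fun _ ht => le_csSup hbdd ht⟩
  rcases (sq_nonneg (∑ i, z i)).eq_or_lt with hs | hs
  · rw [← hs, mul_zero]
    simpa using hA.dotProduct_mulVec_nonneg z
  · rw [← le_div_iff₀ hs]
    refine csSup_le ⟨0, h0⟩ fun t ht => (le_div_iff₀ hs).mpr ?_
    exact (posSemidef_sub_smul_ones_iff hA.1 t).mp ht.2 z

theorem exists_sum_eq_one_sub_minIdxR_smul_ones_mulVec_eq_zero [Nonempty k] {A : Matrix k k ℝ}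
    (hA : A.PosSemidef) : ∃ z : k → ℝ, ∑ i, z i = 1 ∧ (A - minIdxR A • 𝟏) *ᵥ z = 0 := by
  obtain ⟨⟨_, hB⟩, hmax⟩ := isGreatest_minIdxR hA
  set B := A - minIdxR A • 𝟏
  by_cases hker : ∃ u, B *ᵥ u = 0 ∧ ∑ i, u i ≠ 0
  · obtain ⟨u, hu, hsum⟩ := hker
    refine ⟨(∑ i, u i)⁻¹ • u, ?_, by rw [mulVec_smul, hu, smul_zero]⟩
    simp only [Pi.smul_apply, smul_eq_mul, ← Finset.mul_sum, inv_mul_cancel₀ hsum]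
  push Not at hker
  obtain ⟨w, hw⟩ := (isHermitian_iff_isSymm.mp hB.1).exists_mulVec_eq_of_forall_mulVec_eq_zero
    (p := fun _ => 1) fun u hu => by simpa [dotProduct] using hker u hu
  have hc : 0 < w ⬝ᵥ B *ᵥ w := by
    have hnonneg : 0 ≤ w ⬝ᵥ B *ᵥ w := by simpa using hB.dotProduct_mulVec_nonneg w
    refine hnonneg.lt_of_ne' fun h => ?_
    have hw0 := (hB.dotProduct_mulVec_zero_iff w).mp (by simpa using h)
    rw [hw] at hw0
    exact one_ne_zero (congrFun hw0 (Classical.arbitrary k))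
  have hlarger : (A - (minIdxR A + (w ⬝ᵥ B *ᵥ w)⁻¹) • 𝟏).PosSemidef := by
    rw [add_smul, ← sub_sub]
    exact posSemidef_sub_inv_smul_ones hB hw
  linarith [hmax ⟨by positivity, hlarger⟩, inv_pos.mpr hc]

end Ones

/-- On the hyperplane `M = {z : ∑ z_i = 1}`, the minimizers of the quadratic form
`⟨Az, z⟩` are exactly the solutions of `Az = I(A)·p`, and they exist. -/
theorem quadratic_minimizers_eq_solutions {n : ℕ} (hn : 0 < n)
    (A : Matrix (Fin n) (Fin n) ℝ) (hA : A.PosSemidef) :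
    {z : Fin n → ℝ | (∑ i, z i) = 1 ∧ z ⬝ᵥ A.mulVec z = minIdxR A} =
      {z : Fin n → ℝ | (∑ i, z i) = 1 ∧ A.mulVec z = fun _ => minIdxR A} ∧
    {z : Fin n → ℝ | (∑ i, z i) = 1 ∧ A.mulVec z = fun _ => minIdxR A}.Nonempty := by
  have : Nonempty (Fin n) := ⟨⟨0, hn⟩⟩
  have hB := (isGreatest_minIdxR hA).1.2
  refine ⟨Set.ext fun z => and_congr_right fun hz => dotProduct_mulVec_eq_iff_mulVec_eq hB hz, ?_⟩
  obtain ⟨z, hz, hBz⟩ := exists_sum_eq_one_sub_minIdxR_smul_ones_mulVec_eq_zero hA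
  exact ⟨z, hz, (sub_smul_ones_mulVec_eq_zero_iff A _ hz).mp hBz⟩
end
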